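/- arXiv:1507.08849 — 4 statements merged into one kernel-verified Lean document; each statement's English description precedes it below -/
import Mathlib

section
/- Let n ≥ 3 be odd and let d_0, ..., d_{n-2} ∈ ℝ. Define elements of E(1) = O(1) ⋉ ℝ by D_0 = (1, d_0) and D_i = (-1, d_i) for 1 ≤ i ≤ n-2, and extend to a sequence by the recursion D_{i+n-1} = D_i · D_{i+1} · ... · D_{i+n-2}. Then the sequence (D_i) is periodic with period 2n, i.e. D_{i+2n} = D_i for all i ≥ 0. -/
@[ext] structure E1 where
  ε : ℝˣ
  d : ℝ

namespace E1

instance : Mul E1 := ⟨fun a b => ⟨a.ε * b.ε, (a.ε : ℝ) * b.d + a.d⟩⟩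
instance : One E1 := ⟨⟨1, 0⟩⟩
instance : Inv E1 := ⟨fun a => ⟨a.ε⁻¹, -(((a.ε⁻¹ : ℝˣ) : ℝ) * a.d)⟩⟩

@[simp] lemma mul_def (a b : E1) : a * b = ⟨a.ε * b.ε, (a.ε : ℝ) * b.d + a.d⟩ := rfl
@[simp] lemma one_def : (1 : E1) = ⟨1, 0⟩ := rfl
@[simp] lemma inv_def (a : E1) : a⁻¹ = ⟨a.ε⁻¹, -(((a.ε⁻¹ : ℝˣ) : ℝ) * a.d)⟩ := rfl

instance : Group E1 where
  mul_assoc a b c := by ext <;> simp [mul_assoc] <;> ring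
  one_mul a := by ext <;> simp
  mul_one a := by ext <;> simp
  inv_mul_cancel a := by ext <;> simp

end E1

-- auxiliary lemmas

lemma E1.eps_mul (a b : E1) : (a * b).ε = a.ε * b.ε := rfl

lemma E1.eps_inv (a : E1) : (a⁻¹).ε = (a.ε)⁻¹ := rfl

lemma E1.eps_prod (l : List E1) : l.prod.ε = (l.map E1.ε).prod := by
  induction l with
  | nil => rfl
  | cons a t ih => simp only [List.prod_cons, List.map_cons, E1.eps_mul, ih]

lemma E1.sq_eq_one (a : E1) (h : a.ε = -1) : a * a = 1 := by
  ext <;> simp [h]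

lemma E1.inv_self (a : E1) (h : a.ε = -1) : a⁻¹ = a :=
  (eq_inv_of_mul_eq_one_left (E1.sq_eq_one a h)).symm

/-- For odd `n ≥ 3` and reals `d 0, …, d (n-2)`, the sequence in `E(1)` starting with
`D 0 = (1, d 0)`, `D i = (-1, d i)` for `1 ≤ i ≤ n-2`, extended by the Fibonacci-type
recursion `D (i+n-1) = D i ⋯ D (i+n-2)`, is periodic with period `2n`. -/
theorem fibonacci_sequence_periodic (n : ℕ) (hn : 3 ≤ n) (hodd : Odd n) (d : ℕ → ℝ)
    (D : ℕ → E1)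
    (hD0 : D 0 = ⟨1, d 0⟩)
    (hDi : ∀ i : ℕ, 1 ≤ i → i ≤ n - 2 → D i = ⟨-1, d i⟩)
    (hrec : ∀ i : ℕ, D (i + n - 1) = ((List.range (n - 1)).map (fun j => D (i + j))).prod) :
    ∀ i : ℕ, D (i + 2 * n) = D i := by
  obtain ⟨m, rfl⟩ : ∃ m, n = m + 2 := ⟨n - 2, by omega⟩
  have hm : 1 ≤ m := by omega
  have hmodd : Odd m := by
    rcases hodd with ⟨k, hk⟩
    exact ⟨k - 1, by omega⟩
  -- restate the recursion with clean arithmetic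
  have hrec' : ∀ i, D (i + (m + 1)) =
      ((List.range (m + 1)).map (fun j => D (i + j))).prod := by
    intro i
    have h := hrec i
    have e1 : i + (m + 2) - 1 = i + (m + 1) := by omega
    have e2 : m + 2 - 1 = m + 1 := by omega
    rw [e1, e2] at h
    exact h
  -- shifted-function equality
  have hfe : ∀ i : ℕ, ((fun j => D (i + j)) ∘ Nat.succ) = fun j => D (i + 1 + j) := by
    intro i; funext j
    simp only [Function.comp_apply]
    congr 1
    omega
  -- the key recursion: D (i+n) = (D i)⁻¹ * D (i+n-1) * D (i+n-1)
  have hkey : ∀ i, D (i + (m + 2)) =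
      (D i)⁻¹ * (D (i + (m + 1)) * D (i + (m + 1))) := by
    intro i
    have h2 := hrec' (i + 1)
    have e : i + 1 + (m + 1) = i + (m + 2) := by omega
    rw [e] at h2
    have hL1 : D (i + (m + 1)) =
        D i * ((List.range m).map (fun j => D (i + 1 + j))).prod := by
      rw [hrec' i, List.range_succ_eq_map, List.map_cons, List.map_map, hfe i,
        List.prod_cons, Nat.add_zero]
    have hL2 : D (i + (m + 2)) =
        ((List.range m).map (fun j => D (i + 1 + j))).prod * D (i + (m + 1)) := by
      rw [h2, List.range_succ, List.map_append, List.prod_append, List.map_singleton,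
        List.prod_singleton]
      congr 2
      omega
    have hB : ((List.range m).map (fun j => D (i + 1 + j))).prod =
        (D i)⁻¹ * D (i + (m + 1)) := by
      rw [hL1, inv_mul_cancel_left]
    rw [hL2, hB, mul_assoc]
  -- sign lemma
  have hsign : ∀ i, (D i).ε = if i % (m + 2) = 0 then 1 else -1 := by
    intro i
    induction i using Nat.strong_induction_on with
    | _ i ih =>
      rcases lt_or_ge i (m + 2) with hlt | hge
      · rw [Nat.mod_eq_of_lt hlt]
        rcases Nat.eq_zero_or_pos i with rfl | hpos
        · rw [hD0]; simp
        rcases lt_or_ge i (m + 1) with h1 | h1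
        · rw [hDi i hpos (by omega)]
          simp only [if_neg (by omega : ¬ i = 0)]
        · have hi : i = m + 1 := by omega
          subst hi
          have h0 := hrec' 0
          simp only [Nat.zero_add] at h0
          rw [if_neg (by omega : ¬ m + 1 = 0), h0, E1.eps_prod, List.map_map,
            List.range_succ_eq_map, List.map_cons, List.map_map, List.prod_cons]
          have hhead : (E1.ε ∘ fun j => D j) 0 = 1 := by
            simp [Function.comp, hD0]
          have htail : ((List.range m).map ((E1.ε ∘ fun j => D j) ∘ Nat.succ)).prod
              = (-1 : ℝˣ) ^ m := by
            rw [List.prod_eq_pow_card _ (-1 : ℝˣ), List.length_map, List.length_range]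
            intro x hx
            simp only [List.mem_map, List.mem_range] at hx
            obtain ⟨j, hj, rfl⟩ := hx
            simp only [Function.comp_apply]
            rw [hDi (j + 1) (by omega) (by omega)]
          rw [hhead, htail, one_mul, hmodd.neg_one_pow]
      · obtain ⟨k, rfl⟩ : ∃ k, i = k + (m + 2) := ⟨i - (m + 2), by omega⟩
        rw [hkey k, E1.eps_mul, E1.eps_mul, E1.eps_inv,
          ih k (by omega), ih (k + (m + 1)) (by omega), Nat.add_mod_right]
        split_ifs <;> simp
  -- step lemmas
  have hstep0 : ∀ i, i % (m + 2) = 0 → D (i + (m + 2)) = (D i)⁻¹ := by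
    intro i hi
    have hx : (D (i + (m + 1))).ε = -1 := by
      rw [hsign]
      have : (i + (m + 1)) % (m + 2) = m + 1 := by
        rw [← Nat.mod_add_mod, hi, Nat.zero_add, Nat.mod_eq_of_lt (by omega)]
      rw [this, if_neg (by omega)]
    rw [hkey i, E1.sq_eq_one _ hx, mul_one]
  have hstep2 : ∀ i, 2 ≤ i % (m + 2) → D (i + (m + 2)) = D i := by
    intro i hi
    have hrlt : i % (m + 2) < m + 2 := Nat.mod_lt _ (by omega)
    have hx : (D (i + (m + 1))).ε = -1 := by
      rw [hsign]
      have : (i + (m + 1)) % (m + 2) = i % (m + 2) - 1 := by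
        rw [← Nat.mod_add_mod]
        have e : i % (m + 2) + (m + 1) = (m + 2) + (i % (m + 2) - 1) := by omega
        rw [e, Nat.add_mod_left, Nat.mod_eq_of_lt (by omega)]
      rw [this, if_neg (by omega)]
    have hself : (D i).ε = -1 := by
      rw [hsign, if_neg (by omega)]
    rw [hkey i, E1.sq_eq_one _ hx, mul_one, E1.inv_self _ hself]
  -- main proof
  intro i
  have e2n : i + 2 * (m + 2) = (i + (m + 2)) + (m + 2) := by omega
  rcases Nat.lt_or_ge (i % (m + 2)) 2 with hr | hr
  · interval_cases h : i % (m + 2)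
    · -- i ≡ 0
      have h1 : (i + (m + 2)) % (m + 2) = 0 := by rw [Nat.add_mod_right]; exact h
      rw [e2n, hstep0 _ h1, hstep0 _ h, inv_inv]
    · -- i ≡ 1
      have hdiv : (i + (m + 1)) % (m + 2) = 0 := by
        rw [← Nat.mod_add_mod, h]
        have e : 1 + (m + 1) = m + 2 := by omega
        rw [e, Nat.mod_self]
      have hY : D (i + (m + 1) + (m + 2)) = (D (i + (m + 1)))⁻¹ := hstep0 _ hdiv
      have eY : i + (m + 2) + (m + 1) = i + (m + 1) + (m + 2) := by omega
      have hεi : (D i).ε = -1 := by rw [hsign, if_neg (by omega)]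
      have hεi' : (D (i + (m + 2))).ε = -1 := by
        rw [hsign, Nat.add_mod_right, h]
        norm_num
      rw [e2n, hkey (i + (m + 2)), E1.inv_self _ hεi', eY, hY,
        hkey i, E1.inv_self _ hεi]
      group
  · rw [e2n, hstep2 _ (by rw [Nat.add_mod_right]; exact hr), hstep2 _ hr]
end

section
/- Let n ≥ 3 be odd and let d_0, ..., d_{n-2} ∈ ℝ. Let Γ ⊆ E(1) be the subgroup generated by D_0 = (1, d_0), D_1 = (-1, d_1), ..., D_{n-2} = (-1, d_{n-2}). Then there exists a surjective group homomorphism Φ : F(n-1, 2n) → Γ with Φ(a_i) = D_i for i = 0, ..., n-2. -/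
/-- The Fibonacci relation `a_i a_{i+1} ⋯ a_{i+r-1} = a_{i+r}` (indices mod `m`),
written as a relator in the free group on `ZMod m`. -/
def fibonacciRelation (r m : ℕ) (i : ZMod m) : FreeGroup (ZMod m) :=
  ((List.range r).map (fun j => FreeGroup.of (i + (j : ZMod m)))).prod *
    (FreeGroup.of (i + (r : ZMod m)))⁻¹

/-- The Fibonacci group `F(r, m) = ⟨a_0, …, a_{m-1} ∣ a_i a_{i+1} ⋯ a_{i+r-1} = a_{i+r}⟩`. -/
abbrev FibonacciGroup (r m : ℕ) : Type :=
  PresentedGroup (Set.range (fibonacciRelation r m))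

/-! The generators go to the Fibonacci sequence `x` of order `n - 1` in `E(1)` with initial terms
`D 0, …, D (n - 2)`, so it suffices that `x` has period `2n`. Comparing the recurrence at `k`
and at `k + 1` gives `x k * x (k + n) = x (k + n - 1) ^ 2` in any group. As `n` is odd, `x k` is a
translation when `n ∣ k` and a reflection otherwise; reflections square to `1`, so
`x (k + n) = (x k)⁻¹` unless `n ∣ k + n - 1`, which already gives `x (k + 2n) = x k` for those `k`.
For `k ≡ 1 (mod n)` the same identities give `x (k + 2n) = t * x k * t` with the translation
`t = x (k - 1) ^ 2`, and `t * a * t = a` for every translation `t` and reflection `a`. -/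

def fibSeq {M : Type*} [Monoid M] (r : ℕ) (init : ℕ → M) (k : ℕ) : M :=
  if k < r then init k
  else (List.ofFn fun j : Fin r => fibSeq r init (k - r + j)).prod
termination_by k
decreasing_by omega

section
variable {M : Type*} [Monoid M] {r : ℕ} {init : ℕ → M}

theorem fibSeq_of_lt {k : ℕ} (hk : k < r) : fibSeq r init k = init k := by
  rw [fibSeq, if_pos hk]

theorem fibSeq_add (k : ℕ) :
    fibSeq r init (k + r) = ((List.range r).map fun j => fibSeq r init (k + j)).prod := by
  rw [fibSeq, if_neg (by omega), Nat.add_sub_cancel, List.ofFn_eq_map,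
    ← List.map_coe_finRange_eq_range, List.map_map]
  rfl

theorem fibSeq_mul_fibSeq (k : ℕ) :
    fibSeq r init k * fibSeq r init (k + r + 1) =
      fibSeq r init (k + r) * fibSeq r init (k + r) := by
  calc fibSeq r init k * fibSeq r init (k + r + 1)
      = ((List.range (r + 1)).map fun j => fibSeq r init (k + j)).prod := by
        rw [List.prod_range_succ', add_right_comm, fibSeq_add]
        simp only [Nat.succ_eq_add_one, Nat.add_zero, add_assoc, add_comm 1]
    _ = fibSeq r init (k + r) * fibSeq r init (k + r) := by
        rw [List.prod_range_succ, fibSeq_add]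
end

section
variable {G : Type*} [Group G] {r : ℕ} {init : ℕ → G}

theorem fibSeq_mem_closure (k : ℕ) : fibSeq r init k ∈ Subgroup.closure (init '' Set.Iio r) := by
  induction k using Nat.strong_induction_on with
  | _ k ih =>
    rcases lt_or_ge k r with hk | hk
    · rw [fibSeq_of_lt hk]
      exact Subgroup.subset_closure ⟨k, hk, rfl⟩
    · obtain ⟨k, rfl⟩ := Nat.exists_eq_add_of_le' hk
      rw [fibSeq_add]
      refine Subgroup.list_prod_mem _ fun y hy => ?_
      obtain ⟨j, hj, rfl⟩ := List.mem_map.1 hy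
      exact ih _ (by rw [List.mem_range] at hj; omega)

theorem closure_range_fibSeq :
    Subgroup.closure (Set.range (fibSeq r init)) = Subgroup.closure (init '' Set.Iio r) :=
  le_antisymm ((Subgroup.closure_le _).2 (Set.range_subset_iff.2 fibSeq_mem_closure))
    (Subgroup.closure_mono (by rintro _ ⟨k, hk, rfl⟩; exact ⟨k, fibSeq_of_lt hk⟩))

end

theorem fibonacciRelation_lift_eq_one_iff {G : Type*} [Group G] {r m : ℕ} (f : ZMod m → G)
    (i : ZMod m) : FreeGroup.lift f (fibonacciRelation r m i) = 1 ↔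
      ((List.range r).map fun j : ℕ => f (i + j)).prod = f (i + r) := by
  rw [fibonacciRelation, map_mul, map_inv, map_list_prod, List.map_map, mul_inv_eq_one]
  simp only [List.bind_eq_flatMap, List.pure_def, ← List.map_eq_flatMap, List.map_map,
    Function.comp_def, FreeGroup.lift_apply_of]

theorem FibonacciGroup.exists_hom_of_periodic {G : Type*} [Group G] {r m : ℕ} [NeZero m]
    (x : ℕ → G) (hrec : ∀ k, ((List.range r).map fun j => x (k + j)).prod = x (k + r))
    (hper : Function.Periodic x m) :
    ∃ Φ : FibonacciGroup r m →* G, (∀ i : ℕ, Φ (PresentedGroup.of (i : ZMod m)) = x i) ∧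
      Φ.range = Subgroup.closure (Set.range x) := by
  have hval (i : ZMod m) (j : ℕ) : x (i + j : ZMod m).val = x (i.val + j) := by
    rw [ZMod.val_add, ZMod.val_natCast, Nat.add_mod_mod, hper.map_mod_nat]
  have hrel : ∀ rel ∈ Set.range (fibonacciRelation r m),
      FreeGroup.lift (fun i => x i.val) rel = 1 := by
    rintro _ ⟨i, rfl⟩
    rw [fibonacciRelation_lift_eq_one_iff]
    simp only [hval, hrec]
  have hof (i : ℕ) : PresentedGroup.toGroup hrel (.of (i : ZMod m)) = x i := by
    rw [PresentedGroup.toGroup.of, ZMod.val_natCast, hper.map_mod_nat]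
  refine ⟨PresentedGroup.toGroup hrel, hof, ?_⟩
  rw [MonoidHom.range_eq_map, ← PresentedGroup.closure_range_of, MonoidHom.map_closure,
    ← Set.range_comp, ← ZMod.natCast_zmod_surjective.range_comp]
  exact congrArg _ (congrArg Set.range (funext hof))

namespace E1

@[simps]
def εHom : E1 →* ℝˣ where
  toFun := ε
  map_one' := rfl
  map_mul' _ _ := rfl

theorem mul_self_eq_one_of_ε_eq_neg_one {a : E1} (ha : a.ε = -1) : a * a = 1 := by
  ext <;> simp [ha]

theorem mul_mul_eq_of_ε_eq_one {a t : E1} (ha : a.ε = -1) (ht : t.ε = 1) : t * a * t = a := by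
  ext <;> simp [ha, ht]

variable {r : ℕ} {init : ℕ → E1}

theorem fibSeq_add_succ_eq_inv {k : ℕ} (hk : (fibSeq r init (k + r)).ε = -1) :
    fibSeq r init (k + r + 1) = (fibSeq r init k)⁻¹ :=
  eq_inv_of_mul_eq_one_right (by rw [fibSeq_mul_fibSeq, mul_self_eq_one_of_ε_eq_neg_one hk])

theorem ε_fibSeq_self (hr : Even r) (hr0 : r ≠ 0) (h0 : (init 0).ε = 1)
    (hi : ∀ i, 0 < i → i < r → (init i).ε = -1) : (fibSeq r init r).ε = -1 := by
  obtain ⟨s, rfl⟩ := Nat.exists_eq_add_one_of_ne_zero hr0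
  have hs : Odd s := Nat.not_even_iff_odd.1 (Nat.even_add_one.1 hr)
  have hrec := fibSeq_add (r := s + 1) (init := init) 0
  rw [zero_add] at hrec
  rw [← εHom_apply, hrec, map_list_prod, List.map_map, List.prod_range_succ',
    List.prod_eq_pow_card _ (-1)]
  · simp [fibSeq_of_lt, h0, hs.neg_one_pow]
  · simp only [List.mem_map, List.mem_range]
    rintro _ ⟨j, hj, rfl⟩
    simp [fibSeq_of_lt (show j + 1 < s + 1 by omega), hi (j + 1) j.succ_pos (by omega)]

theorem ε_fibSeq (hr : Even r) (hr0 : r ≠ 0) (h0 : (init 0).ε = 1)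
    (hi : ∀ i, 0 < i → i < r → (init i).ε = -1) (k : ℕ) :
    (fibSeq r init k).ε = if r + 1 ∣ k then 1 else -1 := by
  induction k using Nat.strong_induction_on with
  | _ k ih =>
    rcases lt_trichotomy k r with hk | rfl | hk
    · rw [fibSeq_of_lt hk]
      rcases Nat.eq_zero_or_pos k with rfl | hk0
      · simpa using h0
      · rw [if_neg (Nat.not_dvd_of_pos_of_lt hk0 (by omega)), hi k hk0 hk]
    · rw [if_neg (Nat.not_dvd_of_pos_of_lt (Nat.pos_of_ne_zero hr0) (by omega))]
      exact ε_fibSeq_self hr hr0 h0 hi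
    · obtain ⟨k, rfl⟩ : ∃ k', k = k' + r + 1 := ⟨k - r - 1, by omega⟩
      have h := congrArg εHom (fibSeq_mul_fibSeq (r := r) (init := init) k)
      have hsq : εHom (fibSeq r init (k + r)) * εHom (fibSeq r init (k + r)) = 1 := by
        rw [εHom_apply, ih _ (by omega)]
        split_ifs <;> simp
      rw [map_mul, map_mul, hsq, εHom_apply, εHom_apply, ih k (by omega)] at h
      rw [eq_inv_of_mul_eq_one_right h]
      simp only [add_assoc, Nat.dvd_add_self_right]
      split_ifs <;> simp

theorem fibSeq_periodic (hr : Even r) (hr0 : r ≠ 0) (h0 : (init 0).ε = 1)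
    (hi : ∀ i, 0 < i → i < r → (init i).ε = -1) :
    Function.Periodic (fibSeq r init) (2 * (r + 1)) := by
  have hε := ε_fibSeq hr hr0 h0 hi
  have hinv (k : ℕ) (hk : ¬r + 1 ∣ k + r) : fibSeq r init (k + r + 1) = (fibSeq r init k)⁻¹ :=
    fibSeq_add_succ_eq_inv (by rw [hε, if_neg hk])
  have hshift {k : ℕ} : r + 1 ∣ k + r + 1 + r ↔ r + 1 ∣ k + r := by
    rw [add_right_comm, add_assoc, Nat.dvd_add_self_right]
  have hgen (k : ℕ) (hk : ¬r + 1 ∣ k + r) : fibSeq r init (k + 2 * (r + 1)) = fibSeq r init k := by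
    rw [show k + 2 * (r + 1) = k + r + 1 + r + 1 by ring, hinv _ (hshift.not.2 hk), hinv _ hk,
      inv_inv]
  have hr_not_dvd : ¬r + 1 ∣ r := Nat.not_dvd_of_pos_of_lt (Nat.pos_of_ne_zero hr0) r.lt_succ_self
  intro k
  by_cases hk : r + 1 ∣ k + r
  case neg => exact hgen k hk
  obtain ⟨k, rfl⟩ : ∃ k', k = k' + 1 := Nat.exists_eq_add_one_of_ne_zero (by
    rintro rfl
    exact hr_not_dvd (by simpa using hk))
  have hdvd : r + 1 ∣ k := by rwa [add_right_comm, add_assoc, Nat.dvd_add_self_right] at hk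
  set t := fibSeq r init k
  set a := fibSeq r init (k + 1)
  have hab : a * fibSeq r init (k + 1 + r + 1) = t⁻¹ * t⁻¹ := by
    rw [fibSeq_mul_fibSeq, add_right_comm, hinv k ((Nat.dvd_add_right hdvd).not.2 hr_not_dvd)]
  have hbc : fibSeq r init (k + 1 + r + 1) * fibSeq r init (k + 1 + 2 * (r + 1)) = t * t := by
    rw [show k + 1 + 2 * (r + 1) = k + 1 + r + 1 + r + 1 by ring, fibSeq_mul_fibSeq,
      show k + 1 + r + 1 + r = k + 2 * (r + 1) by ring,
      hgen k ((Nat.dvd_add_right hdvd).not.2 hr_not_dvd)]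
  have ha : a.ε = -1 := by
    rw [hε, if_neg ((Nat.dvd_add_right hdvd).not.2 (Nat.not_dvd_of_pos_of_lt one_pos (by omega)))]
  have ht : (t * t).ε = 1 := by simp [t, hε, hdvd]
  calc fibSeq r init (k + 1 + 2 * (r + 1)) = t * t * a * (t * t) := by
        rw [eq_inv_mul_of_mul_eq hbc, eq_inv_mul_of_mul_eq hab]
        simp only [mul_inv_rev, inv_inv, mul_assoc]
    _ = a := mul_mul_eq_of_ε_eq_one ha ht

end E1

/-- For odd `n ≥ 3` and reals `d 0, …, d (n-2)`, with `D 0 = (1, d 0)` and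
`D i = (-1, d i)` for `1 ≤ i ≤ n-2` in `E(1)`, there is a homomorphism from the Fibonacci
group `F(n-1, 2n)` sending `a i` to `D i`, surjective onto the subgroup generated by the
`D i`. -/
theorem exists_epi_onto_one_dim_cryst (n : ℕ) (hn : 3 ≤ n) (hodd : Odd n) (d : ℕ → ℝ)
    (D : ℕ → E1)
    (hD0 : D 0 = ⟨1, d 0⟩)
    (hDi : ∀ i : ℕ, 1 ≤ i → i ≤ n - 2 → D i = ⟨-1, d i⟩) :
    ∃ Φ : FibonacciGroup (n - 1) (2 * n) →* E1,
      (∀ i : ℕ, i ≤ n - 2 → Φ (PresentedGroup.of ((i : ZMod (2 * n)))) = D i) ∧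
      Φ.range = Subgroup.closure {x : E1 | ∃ i : ℕ, i ≤ n - 2 ∧ D i = x} := by
  obtain ⟨r, rfl⟩ : ∃ r, n = r + 1 := ⟨n - 1, by omega⟩
  have hr : Even r := Nat.not_odd_iff_even.1 (Nat.odd_add_one.1 hodd)
  have h0 : (D 0).ε = 1 := by rw [hD0]
  have hi (i : ℕ) (hi0 : 0 < i) (hir : i < r) : (D i).ε = -1 := by rw [hDi i hi0 (by omega)]
  have : NeZero (2 * (r + 1)) := ⟨by omega⟩
  obtain ⟨Φ, hΦ, hrange⟩ := FibonacciGroup.exists_hom_of_periodic (fibSeq r D)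
    (fun k => (fibSeq_add k).symm) (E1.fibSeq_periodic hr (by omega) h0 hi)
  refine ⟨Φ, fun i hir => by rw [hΦ, fibSeq_of_lt (by omega)], ?_⟩
  rw [hrange, closure_range_fibSeq]
  congr 1
  ext y
  simp only [Set.mem_image, Set.mem_Iio, Set.mem_ofPred_eq]
  exact exists_congr fun i => and_congr_left' (by omega)
end

section
/- Let n ≥ 3 be odd, let B_i = diag(-1,...,-1,1,-1,...,-1) ∈ O(n) (with +1 in position i) and b_i = (1/2)(e_i + e_{i+1}) ∈ ℝⁿ for 1 ≤ i ≤ n-1. Then the subgroup Γ_n of E(n) generated by (B_1, b_1), ..., (B_{n-1}, b_{n-1}) is torsion-free. -/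
@[ext] structure En (n : ℕ) where
  A : Matrix.orthogonalGroup (Fin n) ℝ
  v : Fin n → ℝ

namespace En

variable {n : ℕ}

instance : Mul (En n) :=
  ⟨fun a b => ⟨a.A * b.A, (a.A : Matrix (Fin n) (Fin n) ℝ).mulVec b.v + a.v⟩⟩
instance : One (En n) := ⟨⟨1, 0⟩⟩
noncomputable instance : Inv (En n) :=
  ⟨fun a => ⟨a.A⁻¹, -((star (a.A : Matrix (Fin n) (Fin n) ℝ)).mulVec a.v)⟩⟩

@[simp] lemma mul_def (a b : En n) :
    a * b = ⟨a.A * b.A, (a.A : Matrix (Fin n) (Fin n) ℝ).mulVec b.v + a.v⟩ := rfl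
@[simp] lemma one_def : (1 : En n) = ⟨1, 0⟩ := rfl
@[simp] lemma inv_def (a : En n) :
    a⁻¹ = ⟨a.A⁻¹, -((star (a.A : Matrix (Fin n) (Fin n) ℝ)).mulVec a.v)⟩ := rfl

noncomputable instance : Group (En n) where
  mul_assoc a b c := by
    ext <;> simp [mul_assoc, Matrix.mulVec_add, ← Matrix.mulVec_mulVec, add_assoc]
  one_mul a := by ext <;> simp
  mul_one a := by ext <;> simp
  inv_mul_cancel a := by ext <;> simp

end En

namespace HWAux

/-! ### ZMod 2 helpers -/

lemma zcases (a : ZMod 2) : a = 0 ∨ a = 1 := by revert a; decide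

lemma zadd (a : ZMod 2) : a + a = 0 := by revert a; decide

lemma zif1 : ((1:ZMod 2) = 0) ↔ False := by decide
lemma zif0 : ((0:ZMod 2) = 0) ↔ True := by decide
lemma zif11 : ((1+1:ZMod 2) = 0) ↔ True := by decide
lemma zif01 : ((0+1:ZMod 2) = 0) ↔ False := by decide
lemma zif10 : ((1+0:ZMod 2) = 0) ↔ False := by decide
lemma zif00 : ((0+0:ZMod 2) = 0) ↔ True := by decide

lemma signMul (a b : ZMod 2) :
    ((if a = 0 then (1:ℝ) else -1) * (if b = 0 then (1:ℝ) else -1))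
      = (if a + b = 0 then (1:ℝ) else -1) := by
  rcases zcases a with h | h <;> subst h <;> rcases zcases b with h' | h' <;> subst h' <;>
    simp only [zif1, zif0, zif11, zif01, zif10, zif00, if_true, if_false] <;> norm_num

lemma halfCase (ε : ℝ) (hε : ε = 1 ∨ ε = -1) (b1 b2 : ZMod 2) (t1 t2 : ℤ) :
    ∃ t : ℤ, ε * ((t2 : ℝ) + (if b2 = 0 then 0 else 1/2)) + ((t1 : ℝ) + (if b1 = 0 then 0 else 1/2))
      = (t : ℝ) + (if b1 + b2 = 0 then 0 else 1/2) := by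
  rcases hε with h | h <;> subst h <;>
    rcases zcases b1 with h1 | h1 <;> subst h1 <;>
    rcases zcases b2 with h2 | h2 <;> subst h2
  · refine ⟨t1 + t2, ?_⟩
    simp only [zif1, zif0, zif11, zif01, zif10, zif00, if_true, if_false]
    push_cast
    ring
  · refine ⟨t1 + t2, ?_⟩
    simp only [zif1, zif0, zif11, zif01, zif10, zif00, if_true, if_false]
    push_cast
    ring
  · refine ⟨t1 + t2, ?_⟩
    simp only [zif1, zif0, zif11, zif01, zif10, zif00, if_true, if_false]
    push_cast
    ring
  · refine ⟨t1 + t2 + 1, ?_⟩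
    simp only [zif1, zif0, zif11, zif01, zif10, zif00, if_true, if_false]
    push_cast
    ring
  · refine ⟨t1 - t2, ?_⟩
    simp only [zif1, zif0, zif11, zif01, zif10, zif00, if_true, if_false]
    push_cast
    ring
  · refine ⟨t1 - t2 - 1, ?_⟩
    simp only [zif1, zif0, zif11, zif01, zif10, zif00, if_true, if_false]
    push_cast
    ring
  · refine ⟨t1 - t2, ?_⟩
    simp only [zif1, zif0, zif11, zif01, zif10, zif00, if_true, if_false]
    push_cast
    ring
  · refine ⟨t1 - t2, ?_⟩
    simp only [zif1, zif0, zif11, zif01, zif10, zif00, if_true, if_false]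
    push_cast
    ring

lemma halfNeg (ε : ℝ) (hε : ε = 1 ∨ ε = -1) (b : ZMod 2) (t : ℤ) :
    ∃ t' : ℤ, -(ε * ((t : ℝ) + (if b = 0 then 0 else 1/2)))
      = (t' : ℝ) + (if b = 0 then 0 else 1/2) := by
  rcases hε with h | h <;> subst h <;> rcases zcases b with h1 | h1 <;> subst h1
  · refine ⟨-t, ?_⟩
    simp only [zif1, zif0, if_true, if_false]
    push_cast
    ring
  · refine ⟨-t - 1, ?_⟩
    simp only [zif1, zif0, if_true, if_false]
    push_cast
    ring
  · refine ⟨t, ?_⟩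
    simp only [zif1, zif0, if_true, if_false]
    push_cast
    ring
  · refine ⟨t, ?_⟩
    simp only [zif1, zif0, if_true, if_false]
    push_cast
    ring

/-! ### Combinatorial core -/

lemma descent (f : ℕ → ZMod 2) : ∀ b a, a < b → f a = 1 → f b = 0 →
    ∃ k, a ≤ k ∧ k < b ∧ f k = 1 ∧ f (k + 1) = 0 := by
  intro b
  induction b with
  | zero => omega
  | succ b ih =>
    intro a hab ha hb
    rcases zcases (f b) with h0 | h1
    · have hab' : a < b := by
        rcases Nat.lt_or_ge a b with h | h
        · exact h
        · exfalso; have : a = b := by omega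
          rw [this, h0] at ha; exact one_ne_zero ha.symm
      obtain ⟨k, h1, h2, h3, h4⟩ := ih a hab' ha h0
      exact ⟨k, h1, by omega, h3, h4⟩
    · exact ⟨b, by omega, by omega, h1, hb⟩

lemma combo_aux (n : ℕ) (hodd : Odd n) (f : ℕ → ZMod 2) (m w : Fin n → ZMod 2)
    (hfm : ∀ j : Fin n, f ((j : ℕ) + 1) = m j)
    (hw : ∀ (k : ℕ) (hk : k < n), w ⟨k, hk⟩ = f k + f (k + 1))
    (hfn : f n = f 0)
    (hC2 : ∑ j, m j = 0)
    (hm : ∃ j, m j ≠ 0) : ∃ j, m j = 0 ∧ w j = 1 := by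
  obtain ⟨j₁, hj₁⟩ := hm
  have hb0 : ∃ j : Fin n, m j = 0 := by
    by_contra hcon
    push_neg at hcon
    have hall : ∀ j : Fin n, m j = 1 := fun j => (zcases (m j)).resolve_left (hcon j)
    have hsum : (∑ j : Fin n, m j) = (n : ZMod 2) := by
      rw [Finset.sum_congr rfl (fun j _ => hall j)]
      simp
    rw [hC2] at hsum
    have h2 : (2 : ℕ) ∣ n := (ZMod.natCast_eq_zero_iff n 2).mp hsum.symm
    rcases hodd with ⟨t, ht⟩
    omega
  obtain ⟨a, b, ha, hb, hab, hbn⟩ :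
      ∃ a b : ℕ, f a = 1 ∧ f b = 0 ∧ a < b ∧ b ≤ n := by
    rcases zcases (f 0) with hc0 | hc1
    · have hf1 : f ((j₁ : ℕ) + 1) = 1 := by
        rw [hfm]; exact (zcases (m j₁)).resolve_left hj₁
      have hfn0 : f n = 0 := by rw [hfn, hc0]
      refine ⟨(j₁ : ℕ) + 1, n, hf1, hfn0, ?_, le_rfl⟩
      have hle : (j₁ : ℕ) + 1 ≤ n := j₁.isLt
      rcases Nat.lt_or_ge ((j₁ : ℕ) + 1) n with h | h
      · exact h
      · exfalso
        have he : (j₁ : ℕ) + 1 = n := by omega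
        rw [he, hfn0] at hf1; exact one_ne_zero hf1.symm
    · obtain ⟨j, hj⟩ := hb0
      exact ⟨0, (j : ℕ) + 1, hc1, by rw [hfm, hj], by omega, j.isLt⟩
  obtain ⟨k, _, hkb, hk1, hk0⟩ := descent f b a hab ha hb
  have hkn : k < n := by omega
  refine ⟨⟨k, hkn⟩, ?_, ?_⟩
  · rw [← hfm ⟨k, hkn⟩]; exact hk0
  · rw [hw k hkn, hk1, hk0]; rfl

lemma combo (n : ℕ) (hodd : Odd n) (m w : Fin n → ZMod 2)
    (hC1 : ∀ j k : Fin n, m j + (∑ l ∈ Finset.univ.filter (· ≤ j), w l)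
        = m k + (∑ l ∈ Finset.univ.filter (· ≤ k), w l))
    (hC2 : ∑ j, m j = 0) (hC3 : ∑ j, w j = 0)
    (hm : ∃ j, m j ≠ 0) : ∃ j, m j = 0 ∧ w j = 1 := by
  obtain ⟨j₁, hj₁⟩ := hm
  classical
  let S : ℕ → ZMod 2 := fun k => ∑ l ∈ Finset.univ.filter (fun l : Fin n => (l : ℕ) < k), w l
  have hS0 : S 0 = 0 := by
    show (∑ l ∈ Finset.univ.filter (fun l : Fin n => (l : ℕ) < 0), w l) = 0
    simp
  have hSn : S n = 0 := by
    show (∑ l ∈ Finset.univ.filter (fun l : Fin n => (l : ℕ) < n), w l) = 0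
    rw [Finset.filter_true_of_mem (fun l _ => l.isLt)]
    exact hC3
  have hSstep : ∀ (k : ℕ) (hk : k < n), S (k + 1) = S k + w ⟨k, hk⟩ := by
    intro k hk
    show (∑ l ∈ Finset.univ.filter (fun l : Fin n => (l : ℕ) < k + 1), w l)
      = (∑ l ∈ Finset.univ.filter (fun l : Fin n => (l : ℕ) < k), w l) + w ⟨k, hk⟩
    have hins : Finset.univ.filter (fun l : Fin n => (l : ℕ) < k + 1)
        = insert (⟨k, hk⟩ : Fin n) (Finset.univ.filter (fun l : Fin n => (l : ℕ) < k)) := by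
      apply Finset.ext
      intro l
      simp only [Finset.mem_filter, Finset.mem_univ, true_and, Finset.mem_insert, Fin.ext_iff]
      omega
    rw [hins, Finset.sum_insert (by simp)]
    exact add_comm _ _
  have hsS : ∀ j : Fin n, (∑ l ∈ Finset.univ.filter (· ≤ j), w l) = S ((j : ℕ) + 1) := by
    intro j
    show _ = (∑ l ∈ Finset.univ.filter (fun l : Fin n => (l : ℕ) < (j : ℕ) + 1), w l)
    apply Finset.sum_congr _ (fun _ _ => rfl)
    apply Finset.ext
    intro l
    simp only [Finset.mem_filter, Finset.mem_univ, true_and, Fin.le_def]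
    omega
  set c : ZMod 2 := m j₁ + S ((j₁ : ℕ) + 1) with hc
  apply combo_aux n hodd (fun k => c + S k) m w ?_ ?_ ?_ hC2 ⟨j₁, hj₁⟩
  · intro j
    beta_reduce
    have h1 : m j + S ((j : ℕ) + 1) = m j₁ + S ((j₁ : ℕ) + 1) := by
      rw [← hsS, ← hsS]; exact hC1 j j₁
    rw [hc]
    linear_combination -h1 + zadd (S ((j : ℕ) + 1))
  · intro k hk
    beta_reduce
    linear_combination hSstep k hk - zadd (c + S k) + zadd (w ⟨k, hk⟩) + zadd (S k)
      - zadd (S (k+1))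
  · beta_reduce
    rw [hS0, hSn]

/-! ### The invariant -/

variable {n : ℕ}

/-- The invariant preserved by the Hantzsche–Wendt group. -/
def HW (x : En n) : Prop :=
  ∃ m w : Fin n → ZMod 2,
    (∀ j k : Fin n, j ≠ k → (x.A : Matrix (Fin n) (Fin n) ℝ) j k = 0) ∧
    (∀ j : Fin n, (x.A : Matrix (Fin n) (Fin n) ℝ) j j = if m j = 0 then 1 else -1) ∧
    (∀ j : Fin n, ∃ t : ℤ, x.v j = (t : ℝ) + (if w j = 0 then 0 else 1/2)) ∧
    (∀ j k : Fin n, m j + (∑ l ∈ Finset.univ.filter (· ≤ j), w l)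
        = m k + (∑ l ∈ Finset.univ.filter (· ≤ k), w l)) ∧
    (∑ j, m j = 0) ∧ (∑ j, w j = 0)

lemma HW_one : HW (1 : En n) := by
  refine ⟨0, 0, ?_, ?_, ?_, ?_, ?_, ?_⟩
  · intro j k hjk
    show (1 : Matrix (Fin n) (Fin n) ℝ) j k = 0
    simp [Matrix.one_apply_ne hjk]
  · intro j
    show (1 : Matrix (Fin n) (Fin n) ℝ) j j = _
    simp
  · exact fun j => ⟨0, by simp⟩
  · intro j k; simp
  · simp
  · simp

lemma diag_sign {x : En n} {m : Fin n → ZMod 2}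
    (hdiag : ∀ j : Fin n, (x.A : Matrix (Fin n) (Fin n) ℝ) j j = if m j = 0 then 1 else -1)
    (j : Fin n) :
    (x.A : Matrix (Fin n) (Fin n) ℝ) j j = 1 ∨ (x.A : Matrix (Fin n) (Fin n) ℝ) j j = -1 := by
  rw [hdiag j]
  rcases zcases (m j) with h | h <;> rw [h]
  · left; rw [if_pos rfl]
  · right; rw [if_neg one_ne_zero]

lemma HW_mul {x y : En n} (hx : HW x) (hy : HW y) : HW (x * y) := by
  obtain ⟨m1, w1, hoff1, hdiag1, hv1, hc11, hc21, hc31⟩ := hx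
  obtain ⟨m2, w2, hoff2, hdiag2, hv2, hc12, hc22, hc32⟩ := hy
  have hentry : ∀ j k : Fin n, ((x * y).A : Matrix (Fin n) (Fin n) ℝ) j k
      = (x.A : Matrix (Fin n) (Fin n) ℝ) j j * (y.A : Matrix (Fin n) (Fin n) ℝ) j k := by
    intro j k
    show ((x.A : Matrix (Fin n) (Fin n) ℝ) * (y.A : Matrix (Fin n) (Fin n) ℝ)) j k = _
    rw [Matrix.mul_apply]
    apply Finset.sum_eq_single_of_mem j (Finset.mem_univ j)
    intro l _ hl
    rw [hoff1 j l (Ne.symm hl), zero_mul]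
  refine ⟨m1 + m2, w1 + w2, ?_, ?_, ?_, ?_, ?_, ?_⟩
  · intro j k hjk
    rw [hentry, hoff2 j k hjk, mul_zero]
  · intro j
    rw [hentry, hdiag1, hdiag2]
    exact signMul (m1 j) (m2 j)
  · intro j
    have hvj : (x * y).v j = (x.A : Matrix (Fin n) (Fin n) ℝ) j j * y.v j + x.v j := by
      show ((x.A : Matrix (Fin n) (Fin n) ℝ).mulVec y.v + x.v) j = _
      simp only [Pi.add_apply]
      congr 1
      show (∑ l, (x.A : Matrix (Fin n) (Fin n) ℝ) j l * y.v l) = _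
      apply Finset.sum_eq_single_of_mem j (Finset.mem_univ j)
      intro l _ hl
      rw [hoff1 j l (Ne.symm hl), zero_mul]
    obtain ⟨t1, ht1⟩ := hv1 j
    obtain ⟨t2, ht2⟩ := hv2 j
    obtain ⟨t, ht⟩ := halfCase _ (diag_sign hdiag1 j) (w1 j) (w2 j) t1 t2
    refine ⟨t, ?_⟩
    rw [hvj, ht1, ht2]
    exact ht
  · intro j k
    simp only [Pi.add_apply, Finset.sum_add_distrib]
    have h1 := hc11 j k
    have h2 := hc12 j k
    linear_combination h1 + h2
  · simp only [Pi.add_apply, Finset.sum_add_distrib, hc21, hc22, add_zero]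
  · simp only [Pi.add_apply, Finset.sum_add_distrib, hc31, hc32, add_zero]

lemma HW_inv {x : En n} (hx : HW x) : HW x⁻¹ := by
  obtain ⟨m, w, hoff, hdiag, hv, hc1, hc2, hc3⟩ := hx
  have hentry : ∀ j k : Fin n, ((x⁻¹).A : Matrix (Fin n) (Fin n) ℝ) j k
      = (x.A : Matrix (Fin n) (Fin n) ℝ) k j := by
    intro j k
    show (star (x.A : Matrix (Fin n) (Fin n) ℝ)) j k = _
    simp [Matrix.star_apply]
  refine ⟨m, w, ?_, ?_, ?_, hc1, hc2, hc3⟩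
  · intro j k hjk
    rw [hentry]
    exact hoff k j (Ne.symm hjk)
  · intro j
    rw [hentry]; exact hdiag j
  · intro j
    have hvj : (x⁻¹).v j = -((x.A : Matrix (Fin n) (Fin n) ℝ) j j * x.v j) := by
      show (-((star (x.A : Matrix (Fin n) (Fin n) ℝ)).mulVec x.v)) j = _
      simp only [Pi.neg_apply]
      congr 1
      show (∑ l, (star (x.A : Matrix (Fin n) (Fin n) ℝ)) j l * x.v l) = _
      have hrw : ∀ l : Fin n, (star (x.A : Matrix (Fin n) (Fin n) ℝ)) j l * x.v l
          = (x.A : Matrix (Fin n) (Fin n) ℝ) l j * x.v l := by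
        intro l; rw [Matrix.star_apply, star_trivial]
      rw [Finset.sum_congr rfl (fun l _ => hrw l)]
      apply Finset.sum_eq_single_of_mem j (Finset.mem_univ j)
      intro l _ hl
      rw [hoff l j hl, zero_mul]
    obtain ⟨t, ht⟩ := hv j
    obtain ⟨t', ht'⟩ := halfNeg _ (diag_sign hdiag j) (w j) t
    refine ⟨t', ?_⟩
    rw [hvj, ht]
    exact ht'

lemma pow_v (x : En n) (j : Fin n)
    (hrow : ∀ k, k ≠ j → (x.A : Matrix (Fin n) (Fin n) ℝ) j k = 0)
    (hdiag : (x.A : Matrix (Fin n) (Fin n) ℝ) j j = 1) :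
    ∀ l : ℕ, (x ^ l).v j = l * x.v j := by
  intro l
  induction l with
  | zero => rw [pow_zero]; show (0 : Fin n → ℝ) j = _; simp
  | succ l ih =>
    rw [pow_succ']
    have hvj : (x * x ^ l).v j
        = (x.A : Matrix (Fin n) (Fin n) ℝ) j j * (x ^ l).v j + x.v j := by
      show ((x.A : Matrix (Fin n) (Fin n) ℝ).mulVec (x ^ l).v + x.v) j = _
      simp only [Pi.add_apply]
      congr 1
      show (∑ k, (x.A : Matrix (Fin n) (Fin n) ℝ) j k * (x ^ l).v k) = _
      apply Finset.sum_eq_single_of_mem j (Finset.mem_univ j)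
      intro k _ hk
      rw [hrow k hk, zero_mul]
    rw [hvj, hdiag, ih]
    push_cast
    ring

/-! ### The generators satisfy the invariant -/

lemma HW_gen (n : ℕ) (hodd : Odd n) (x : En n) (i : Fin (n - 1))
    (hA : (x.A : Matrix (Fin n) (Fin n) ℝ)
        = Matrix.diagonal (fun j : Fin n => if (j : ℕ) = (i : ℕ) then 1 else -1))
    (hv : x.v = fun j : Fin n => if (j : ℕ) = (i : ℕ) ∨ (j : ℕ) = (i : ℕ) + 1 then 1 / 2 else 0) :
    HW x := by
  have hi1 : (i : ℕ) < n := by have := i.isLt; omega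
  have hi2 : (i : ℕ) + 1 < n := by have := i.isLt; omega
  have hww : ∀ l : Fin n,
      (if (l : ℕ) = (i : ℕ) ∨ (l : ℕ) = (i : ℕ) + 1 then (1 : ZMod 2) else 0)
        = (if l = (⟨(i : ℕ), hi1⟩ : Fin n) then 1 else 0)
          + (if l = (⟨(i : ℕ) + 1, hi2⟩ : Fin n) then 1 else 0) := by
    intro l
    by_cases h1 : (l : ℕ) = (i : ℕ) <;> by_cases h2 : (l : ℕ) = (i : ℕ) + 1 <;>
      first
        | omega
        | simp [Fin.ext_iff, h1, h2]
  refine ⟨fun j => if (j : ℕ) = (i : ℕ) then 0 else 1,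
      fun j => if (j : ℕ) = (i : ℕ) ∨ (j : ℕ) = (i : ℕ) + 1 then 1 else 0,
      ?_, ?_, ?_, ?_, ?_, ?_⟩
  · intro j k hjk
    rw [hA]
    exact Matrix.diagonal_apply_ne _ hjk
  · intro j
    rw [hA, Matrix.diagonal_apply_eq]
    by_cases h : (j : ℕ) = (i : ℕ) <;> simp [h]
  · intro j
    rw [hv]
    by_cases h : (j : ℕ) = (i : ℕ) ∨ (j : ℕ) = (i : ℕ) + 1
    · exact ⟨0, by simp [h, one_ne_zero]⟩
    · exact ⟨0, by simp [h]⟩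
  · have key : ∀ j : Fin n,
        (if (j : ℕ) = (i : ℕ) then (0 : ZMod 2) else 1)
          + (∑ l ∈ Finset.univ.filter (· ≤ j),
              (if (l : ℕ) = (i : ℕ) ∨ (l : ℕ) = (i : ℕ) + 1 then (1 : ZMod 2) else 0)) = 1 := by
      intro j
      rw [Finset.sum_congr rfl (fun l _ => hww l), Finset.sum_add_distrib,
        Finset.sum_ite_eq' _ (⟨(i : ℕ), hi1⟩ : Fin n),
        Finset.sum_ite_eq' _ (⟨(i : ℕ) + 1, hi2⟩ : Fin n)]
      simp only [Finset.mem_filter, Finset.mem_univ, true_and, Fin.le_def, Fin.val_mk]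
      split_ifs with h1 h2 h3 <;> first | decide | omega
    intro j k
    rw [key j, key k]
  · have hsplit : ∀ j : Fin n, (if (j : ℕ) = (i : ℕ) then (0 : ZMod 2) else 1)
        = 1 + (if j = (⟨(i : ℕ), hi1⟩ : Fin n) then 1 else 0) := by
      intro j
      by_cases h : (j : ℕ) = (i : ℕ) <;> simp [Fin.ext_iff, h] <;> decide
    rw [Finset.sum_congr rfl (fun j _ => hsplit j), Finset.sum_add_distrib,
      Finset.sum_const, Finset.card_univ, Fintype.card_fin,
      Finset.sum_ite_eq' _ (⟨(i : ℕ), hi1⟩ : Fin n), if_pos (Finset.mem_univ _)]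
    have hn1 : (n : ZMod 2) = 1 := by
      obtain ⟨t, ht⟩ := hodd
      subst ht
      push_cast
      rw [show ((2 : ZMod 2)) = 0 by decide]
      ring
    rw [nsmul_eq_mul, mul_one, hn1]
    decide
  · rw [Finset.sum_congr rfl (fun l _ => hww l), Finset.sum_add_distrib,
      Finset.sum_ite_eq' _ (⟨(i : ℕ), hi1⟩ : Fin n),
      Finset.sum_ite_eq' _ (⟨(i : ℕ) + 1, hi2⟩ : Fin n),
      if_pos (Finset.mem_univ _), if_pos (Finset.mem_univ _)]
    decide

end HWAux

/-- For odd `n ≥ 3`, the Hantzsche–Wendt group `Γ_n ⊆ E(n)` generated by the elements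
`(B i, b i)` with `B i = diag(-1,…,-1,1,-1,…,-1)` (`+1` in position `i`) and
`b i = ½(e_i + e_{i+1})` is torsion-free. -/
theorem hantzscheWendt_torsionFree (n : ℕ) (hn : 3 ≤ n) (hodd : Odd n)
    (g : Fin (n - 1) → En n)
    (hA : ∀ i : Fin (n - 1), ((g i).A : Matrix (Fin n) (Fin n) ℝ)
        = Matrix.diagonal (fun j : Fin n => if (j : ℕ) = (i : ℕ) then 1 else -1))
    (hv : ∀ i : Fin (n - 1), (g i).v
        = fun j : Fin n => if (j : ℕ) = (i : ℕ) ∨ (j : ℕ) = (i : ℕ) + 1 then 1 / 2 else 0) :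
    ∀ x ∈ Subgroup.closure (Set.range g), ∀ k : ℕ, 0 < k → x ^ k = 1 → x = 1 := by
  intro x hx k hk hxk
  have hHW : HWAux.HW x := by
    refine Subgroup.closure_induction (p := fun y _ => HWAux.HW y) ?_ HWAux.HW_one
      (fun a b _ _ ha hb => HWAux.HW_mul ha hb) (fun a _ ha => HWAux.HW_inv ha) hx
    rintro y ⟨i, rfl⟩
    exact HWAux.HW_gen n hodd (g i) i (hA i) (hv i)
  obtain ⟨m, w, hoff, hdiag, hv', hc1, hc2, hc3⟩ := hHW
  have hvz : ∀ j : Fin n, m j = 0 → x.v j = 0 := by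
    intro j hj
    have h1 : (x.A : Matrix (Fin n) (Fin n) ℝ) j j = 1 := by rw [hdiag j, if_pos hj]
    have h2 := HWAux.pow_v x j (fun l hl => hoff j l (Ne.symm hl)) h1 k
    rw [hxk] at h2
    have h3 : (0 : ℝ) = (k : ℝ) * x.v j := h2
    have h4 : (k : ℝ) ≠ 0 := Nat.cast_ne_zero.mpr (ne_of_gt hk)
    rcases mul_eq_zero.mp h3.symm with h | h
    · exact absurd h h4
    · exact h
  by_cases hM : ∀ j, m j = 0
  · have hA1 : x.A = 1 := by
      apply Subtype.ext
      show (x.A : Matrix (Fin n) (Fin n) ℝ) = 1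
      apply Matrix.ext
      intro j l
      by_cases h : j = l
      · subst h
        rw [hdiag j, if_pos (hM j)]
        exact (Matrix.one_apply_eq j).symm
      · rw [hoff j l h]
        exact (Matrix.one_apply_ne h).symm
    have hv0 : x.v = 0 := funext fun j => hvz j (hM j)
    rw [En.one_def]
    exact En.ext hA1 hv0
  · exfalso
    push_neg at hM
    obtain ⟨j, hj0, hj1⟩ := HWAux.combo n hodd m w hc1 hc2 hc3 hM
    obtain ⟨t, ht⟩ := hv' j
    rw [hj1, if_neg one_ne_zero, hvz j hj0] at ht
    have h5 : ((2 * t + 1 : ℤ) : ℝ) = 0 := by push_cast; linarith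
    have h6 : (2 * t + 1 : ℤ) = 0 := by exact_mod_cast h5
    omega
end

section
/- Let n ≥ 3 be odd and let Γ ⊆ E(n) be a subgroup generated by elements (B_1, b_1), ..., (B_{n-1}, b_{n-1}), where B_i = diag(-1,...,-1,1,-1,...,-1) (with +1 in position i) and b_i ∈ (1/2)ℤⁿ. Then there exists a surjective group homomorphism Φ : F(n-1, 2n) → Γ. -/
section Aux

variable {n : ℕ} (g : Fin (n - 1) → En n)

noncomputable def ginit : En n :=
  ((List.range (n - 1)).map (fun t => if h : t < n - 1 then g ⟨t, h⟩ else 1)).prod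

noncomputable def Aproj : (En n) →* Matrix (Fin n) (Fin n) ℝ where
  toFun a := a.A
  map_one' := by simp
  map_mul' a b := by simp

@[simp] lemma Aproj_apply (a : En n) : Aproj a = (a.A : Matrix (Fin n) (Fin n) ℝ) := rfl

lemma ginitA (hn : 3 ≤ n) (hodd : Odd n)
    (hA : ∀ i : Fin (n - 1), ((g i).A : Matrix (Fin n) (Fin n) ℝ)
      = Matrix.diagonal (fun j : Fin n => if (j : ℕ) = (i : ℕ) then 1 else -1)) :
    ((ginit g).A : Matrix (Fin n) (Fin n) ℝ)
    = Matrix.diagonal (fun k : Fin n => if (k : ℕ) = n - 1 then 1 else -1) := by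
  have key : ∀ l, l ≤ n - 1 →
      ((List.range l).map (fun t =>
          (((if h : t < n - 1 then g ⟨t, h⟩ else 1).A : Matrix (Fin n) (Fin n) ℝ)))).prod
        = Matrix.diagonal (fun k : Fin n => if (k : ℕ) < l then (-1:ℝ)^(l-1) else (-1)^l) := by
    intro l
    induction l with
    | zero => intro _; simp [Matrix.diagonal_one]
    | succ l ih =>
      intro hl
      rw [List.range_succ, List.map_append, List.prod_append, ih (by omega)]
      have hlt : l < n - 1 := by omega
      simp only [List.map_cons, List.map_nil, List.prod_cons, List.prod_nil, mul_one,
        dif_pos hlt, hA ⟨l, hlt⟩, Matrix.diagonal_mul_diagonal]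
      refine congrArg Matrix.diagonal (funext fun k => ?_)
      by_cases h1 : (k : ℕ) < l
      · rw [if_pos h1, if_pos (by omega : (k:ℕ) < l + 1), if_neg (by omega),
          Nat.add_sub_cancel, ← pow_succ, show l - 1 + 1 = l by omega]
      · by_cases h2 : (k : ℕ) = l
        · rw [if_neg h1, if_pos h2, if_pos (by omega), mul_one, Nat.add_sub_cancel]
        · rw [if_neg h1, if_neg h2, if_neg (by omega), pow_succ]
  have hA1 : ((ginit g).A : Matrix (Fin n) (Fin n) ℝ) = Aproj (ginit g) := rfl
  rw [hA1]
  unfold ginit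
  rw [map_list_prod, List.map_map]
  have h2 : (List.map ((⇑(Aproj : En n →* Matrix (Fin n) (Fin n) ℝ)) ∘
        fun t => if h : t < n - 1 then g ⟨t, h⟩ else 1) (List.range (n - 1))).prod
      = Matrix.diagonal (fun k : Fin n => if (k : ℕ) < n - 1 then (-1:ℝ)^(n-1-1) else (-1)^(n-1)) :=
    key (n - 1) le_rfl
  rw [h2]
  have e1 : (-1:ℝ)^(n-1) = 1 := (Nat.Odd.sub_odd hodd odd_one).neg_one_pow
  have e2 : (-1:ℝ)^(n-1-1) = -1 := by
    rw [show n - 1 - 1 = n - 2 by omega]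
    exact (Nat.Odd.sub_even (by omega) hodd (even_iff_exists_two_mul.mpr ⟨1, rfl⟩)).neg_one_pow
  refine congrArg Matrix.diagonal (funext fun k => ?_)
  have := k.isLt
  by_cases h : (k : ℕ) < n - 1
  · rw [if_pos h, if_neg (by omega), e2]
  · rw [if_neg h, if_pos (by omega), e1]

noncomputable def gam (j : ℕ) : En n :=
  if h : j < n - 1 then g ⟨j, h⟩
  else if h2 : j < n ∨ n = 0 then ginit g
  else (gam (j - n))⁻¹ * (gam (j - 1) * gam (j - 1))
termination_by j
decreasing_by all_goals omega


lemma modaux (hn : 2 ≤ n) (x : ℕ) : (x + (n - 1)) % n ≠ x % n := by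
  intro h
  have h2 : x ≡ x + (n-1) [MOD n] := h.symm
  have := (Nat.modEq_iff_dvd' (Nat.le_add_right _ _)).mp h2
  simp only [Nat.add_sub_cancel_left] at this
  have := Nat.le_of_dvd (by omega) this
  omega

lemma gam_lt {j : ℕ} (h : j < n - 1) : gam g j = g ⟨j, h⟩ := by
  rw [gam]; simp [h]

lemma gam_base (hn : n ≠ 0) : gam g (n - 1) = ginit g := by
  rw [gam]; rw [dif_neg (by omega), dif_pos (by omega)]

lemma gam_rec (hn : n ≠ 0) (j : ℕ) :
    gam g (j + n) = (gam g j)⁻¹ * (gam g (j + (n - 1)) * gam g (j + (n - 1))) := by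
  rw [gam]
  rw [dif_neg (by omega), dif_neg (by omega), show j + n - n = j by omega,
    show j + n - 1 = j + (n - 1) by omega]

lemma gamA (hn : 3 ≤ n) (hodd : Odd n)
    (hA : ∀ i : Fin (n - 1), ((g i).A : Matrix (Fin n) (Fin n) ℝ)
      = Matrix.diagonal (fun j : Fin n => if (j : ℕ) = (i : ℕ) then 1 else -1))
    (j : ℕ) : ((gam g j).A : Matrix (Fin n) (Fin n) ℝ)
      = Matrix.diagonal (fun k : Fin n => if (k : ℕ) = j % n then 1 else -1) := by
  induction j using Nat.strong_induction_on with
  | _ j ih =>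
    rcases lt_or_ge j (n - 1) with h | h
    · rw [gam_lt g h, hA, Nat.mod_eq_of_lt (by omega)]
    · rcases lt_or_ge j n with h2 | h2
      · have hj : j = n - 1 := by omega
        subst hj
        rw [gam_base g (by omega), ginitA g hn hodd hA, Nat.mod_eq_of_lt (by omega)]
      · obtain ⟨j', rfl⟩ : ∃ j', j = j' + n := ⟨j - n, by omega⟩
        rw [gam_rec g (by omega) j']
        have hD1 := ih j' (by omega)
        have hD2 := ih (j' + (n - 1)) (by omega)
        simp only [En.mul_def, En.inv_def, Matrix.UnitaryGroup.mul_val,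
          Matrix.UnitaryGroup.inv_val, hD1, hD2, Matrix.star_eq_conjTranspose,
          Matrix.diagonal_conjTranspose, Matrix.diagonal_mul_diagonal, Nat.add_mod_right]
        refine congrArg Matrix.diagonal (funext fun k => ?_)
        have hne : j' % n ≠ (j' + (n - 1)) % n := Ne.symm (modaux (by omega) j')
        by_cases hk : (k : ℕ) = j' % n <;>
          by_cases hk2 : (k : ℕ) = (j' + (n - 1)) % n <;>
          simp [hk, hk2, hne]

lemma gam_vrec (hn : 3 ≤ n) (hodd : Odd n)
    (hA : ∀ i : Fin (n - 1), ((g i).A : Matrix (Fin n) (Fin n) ℝ)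
      = Matrix.diagonal (fun j : Fin n => if (j : ℕ) = (i : ℕ) then 1 else -1))
    (j : ℕ) (k : Fin n) :
    (gam g (j + n)).v k =
      (if (k : ℕ) = j % n then (1:ℝ) else -1) *
        ((if (k : ℕ) = (j + (n - 1)) % n then (1:ℝ) else -1) + 1) * (gam g (j + (n - 1))).v k
      - (if (k : ℕ) = j % n then (1:ℝ) else -1) * (gam g j).v k := by
  rw [gam_rec g (by omega) j]
  simp only [En.mul_def, En.inv_def, Matrix.UnitaryGroup.mul_val, Matrix.UnitaryGroup.inv_val,
    gamA g hn hodd hA, Matrix.star_eq_conjTranspose, Matrix.diagonal_conjTranspose,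
    star_trivial, Pi.add_apply, Pi.neg_apply, Matrix.mulVec_diagonal]
  ring

lemma gam_periodic (hn : 3 ≤ n) (hodd : Odd n)
    (hA : ∀ i : Fin (n - 1), ((g i).A : Matrix (Fin n) (Fin n) ℝ)
      = Matrix.diagonal (fun j : Fin n => if (j : ℕ) = (i : ℕ) then 1 else -1))
    (j : ℕ) : gam g (j + 2 * n) = gam g j := by
  have h2 : 2 ≤ n := by omega
  apply En.ext
  · apply Subtype.ext
    rw [gamA g hn hodd hA, gamA g hn hodd hA, Nat.add_mul_mod_self_right]
  · funext k
    have r1 := gam_vrec g hn hodd hA (j + n) k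
    have r2 := gam_vrec g hn hodd hA j k
    have r3 := gam_vrec g hn hodd hA (j + (n - 1)) k
    rw [show j + n + (n - 1) = j + (n - 1) + n by omega] at r1
    simp only [Nat.add_mod_right] at r1 r3
    rw [show j + 2 * n = j + n + n by ring]
    rw [r1, r3, r2]
    by_cases hb : (k : ℕ) = (j + (n - 1)) % n
    · have ha : ¬((k : ℕ) = j % n) := by rw [hb]; exact modaux h2 j
      have he : ¬((k : ℕ) = (j + (n - 1) + (n - 1)) % n) := by
        rw [hb]; intro hh; exact modaux h2 (j + (n - 1)) hh.symm
      simp only [if_pos hb, if_neg ha, if_neg he]; ring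
    · simp only [if_neg hb]
      by_cases ha : (k : ℕ) = j % n
      · simp only [if_pos ha]; ring
      · simp only [if_neg ha]; ring

lemma gam_mod (hn : 3 ≤ n) (hodd : Odd n)
    (hA : ∀ i : Fin (n - 1), ((g i).A : Matrix (Fin n) (Fin n) ℝ)
      = Matrix.diagonal (fun j : Fin n => if (j : ℕ) = (i : ℕ) then 1 else -1))
    (a : ℕ) : gam g a = gam g (a % (2 * n)) := by
  induction a using Nat.strong_induction_on with
  | _ a ih =>
    rcases lt_or_ge a (2 * n) with h | h
    · rw [Nat.mod_eq_of_lt h]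
    · obtain ⟨b, rfl⟩ : ∃ b, a = b + 2 * n := ⟨a - 2 * n, by omega⟩
      rw [gam_periodic g hn hodd hA b, ih b (by omega), Nat.add_mod_right]

lemma gam_rel (hn : 3 ≤ n) (i : ℕ) :
    ((List.range (n - 1)).map (fun l => gam g (i + l))).prod = gam g (i + (n - 1)) := by
  induction i with
  | zero =>
    rw [show (0 : ℕ) + (n - 1) = n - 1 from Nat.zero_add _, gam_base g (by omega)]
    unfold ginit
    congr 1
    refine List.map_congr_left (fun t ht => ?_)
    have htl : t < n - 1 := List.mem_range.mp ht
    rw [Nat.zero_add, gam_lt g htl, dif_pos htl]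
  | succ i ih =>
    have hrec := gam_rec g (by omega) i
    rw [show i + 1 + (n - 1) = i + n by omega, hrec]
    nth_rewrite 1 [← ih]
    have e1 : (List.range (n - 1)) = 0 :: (List.range (n - 2)).map Nat.succ := by
      rw [show n - 1 = (n - 2) + 1 by omega, List.range_succ_eq_map]
    have e2 : List.range (n - 1) = List.range (n - 2) ++ [n - 2] := by
      rw [show n - 1 = (n - 2) + 1 by omega, List.range_succ]
    conv_lhs => rw [e2]
    conv_rhs => rw [e1]
    simp only [List.map_append, List.prod_append, List.map_cons, List.prod_cons,
      List.map_nil, List.prod_nil, mul_one, List.map_map, Nat.add_zero]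
    have e3 : (List.range (n - 2)).map (fun l => gam g (i + 1 + l))
        = (List.range (n - 2)).map ((fun l => gam g (i + l)) ∘ Nat.succ) := by
      refine List.map_congr_left (fun t _ => ?_)
      simp only [Function.comp_apply]
      congr 1
      omega
    rw [e3, show i + 1 + (n - 2) = i + (n - 1) by omega]
    rw [mul_assoc, inv_mul_cancel_left]

lemma gam_mem (hn : 3 ≤ n) (j : ℕ) : gam g j ∈ Subgroup.closure (Set.range g) := by
  induction j using Nat.strong_induction_on with
  | _ j ih =>
    rcases lt_or_ge j (n - 1) with h | h
    · rw [gam_lt g h]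
      exact Subgroup.subset_closure ⟨_, rfl⟩
    · rcases lt_or_ge j n with h2 | h2
      · have hj : j = n - 1 := by omega
        subst hj
        rw [gam_base g (by omega)]
        refine Subgroup.list_prod_mem _ (fun x hx => ?_)
        obtain ⟨t, _, rfl⟩ := List.mem_map.mp hx
        by_cases htl : t < n - 1
        · rw [dif_pos htl]; exact Subgroup.subset_closure ⟨_, rfl⟩
        · rw [dif_neg htl]; exact one_mem _
      · obtain ⟨j', rfl⟩ : ∃ j', j = j' + n := ⟨j - n, by omega⟩
        rw [gam_rec g (by omega) j']
        exact mul_mem (inv_mem (ih j' (by omega)))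
          (mul_mem (ih _ (by omega)) (ih _ (by omega)))

end Aux

/-- Main theorem: for odd `n ≥ 3`, every subgroup of `E(n)` generated by elements
`(B i, b i)` with `B i = diag(-1,…,-1,1,-1,…,-1)` (`+1` in position `i`) and
`b i ∈ ½ℤⁿ` — in particular every `n`-dimensional Hantzsche–Wendt group —
is an epimorphic image of the Fibonacci group `F(n-1, 2n)`. -/
theorem hantzscheWendt_epi_of_fibonacci (n : ℕ) (hn : 3 ≤ n) (hodd : Odd n)
    (g : Fin (n - 1) → En n)
    (hA : ∀ i : Fin (n - 1), ((g i).A : Matrix (Fin n) (Fin n) ℝ)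
        = Matrix.diagonal (fun j : Fin n => if (j : ℕ) = (i : ℕ) then 1 else -1))
    (hv : ∀ (i : Fin (n - 1)) (j : Fin n), ∃ z : ℤ, (g i).v j = (z : ℝ) / 2) :
    ∃ Φ : FibonacciGroup (n - 1) (2 * n) →* En n,
      Φ.range = Subgroup.closure (Set.range g) := by
  haveI : NeZero (2 * n) := ⟨by omega⟩
  set φ : ZMod (2 * n) → En n := fun i => gam g i.val with hφ
  have key : ∀ (i : ZMod (2 * n)) (j : ℕ), φ (i + (j : ZMod (2 * n))) = gam g (i.val + j) := by
    intro i j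
    show gam g ((i + (j : ZMod (2 * n))).val) = _
    rw [gam_mod g hn hodd hA ((i + (j : ZMod (2 * n))).val), gam_mod g hn hodd hA (i.val + j)]
    congr 1
    rw [ZMod.val_add, ZMod.val_natCast]
    conv_lhs => rw [Nat.add_mod]
    rw [Nat.mod_mod_of_dvd j dvd_rfl]
    conv_rhs => rw [Nat.add_mod]
    exact Nat.mod_mod_of_dvd _ dvd_rfl
  have hrel : ∀ r ∈ Set.range (fibonacciRelation (n - 1) (2 * n)),
      FreeGroup.lift φ r = 1 := by
    rintro r ⟨i, rfl⟩
    unfold fibonacciRelation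
    rw [map_mul, map_inv, map_list_prod]
    simp only [bind_pure_comp, List.map_eq_map, List.map_map]
    have hmap : (List.range (n - 1)).map (⇑(FreeGroup.lift φ) ∘
          ((fun j : ZMod (2 * n) => FreeGroup.of (i + j)) ∘ (Nat.cast : ℕ → ZMod (2 * n))))
        = (List.range (n - 1)).map (fun l => gam g (i.val + l)) :=
      List.map_congr_left (fun t _ => by
        simp only [Function.comp_apply, FreeGroup.lift_apply_of]
        exact key i t)
    rw [hmap, gam_rel g hn i.val, FreeGroup.lift_apply_of, key i (n - 1)]
    exact mul_inv_cancel _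
  refine ⟨PresentedGroup.toGroup hrel, ?_⟩
  rw [MonoidHom.range_eq_map, ← PresentedGroup.closure_range_of
    (Set.range (fibonacciRelation (n - 1) (2 * n))), MonoidHom.map_closure]
  have himg : (PresentedGroup.toGroup hrel) '' (Set.range PresentedGroup.of) = Set.range φ := by
    rw [← Set.range_comp]
    refine congrArg Set.range (funext fun x => ?_)
    exact PresentedGroup.toGroup.of hrel
  rw [himg]
  apply le_antisymm
  · rw [Subgroup.closure_le]
    rintro x ⟨i, rfl⟩
    exact gam_mem g hn i.val
  · rw [Subgroup.closure_le]
    rintro x ⟨i, rfl⟩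
    have hi : φ (((i : ℕ) : ZMod (2 * n))) = g i := by
      show gam g (((i : ℕ) : ZMod (2 * n)).val) = g i
      rw [ZMod.val_natCast, Nat.mod_eq_of_lt (by have := i.isLt; omega), gam_lt g i.isLt]
    exact hi ▸ Subgroup.subset_closure ⟨_, rfl⟩
end
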